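/- Let H₁, H₂ be real Hilbert spaces, F : H₁ → ℝ ∪ {+∞} proper convex lsc, A : H₁ → H₂ bounded linear, r > 0, and assume rA*A + ∂F is strongly monotone so that (rA*A + ∂F)^{-1} exists and is Lipschitz. Then the resolvent of the monotone operator λ ↦ r ∂(F* ∘ (-A*))(λ) satisfies (I + r∂(F*∘(-A*)))^{-1} = I + r A ∘ (rA*A + ∂F)^{-1} ∘ (-A*), where F* is the Fenchel conjugate and ∂F* = (∂F)^{-1}. -/
import Mathlib


open scoped RealInnerProductSpace

/-- The set of subgradients of the extended-real-valued function `F` at `u`. -/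
def subgradientSet {H : Type*} [NormedAddCommGroup H] [InnerProductSpace ℝ H]
    (F : H → EReal) (u : H) : Set H :=
  {ξ | ∀ y, F u + ((⟪ξ, y - u⟫ : ℝ) : EReal) ≤ F y}

/-- Gabay's resolvent identity: `(I + r∂(F*∘(-A*)))⁻¹ = I + r A ∘ (rA*A + ∂F)⁻¹ ∘ (-A*)`,
expressed via the single-valued Lipschitz inverse `T = (rA*A + ∂F)⁻¹`. -/
theorem stmt_6 {H₁ H₂ : Type*}
    [NormedAddCommGroup H₁] [InnerProductSpace ℝ H₁] [CompleteSpace H₁]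
    [NormedAddCommGroup H₂] [InnerProductSpace ℝ H₂] [CompleteSpace H₂]
    (F : H₁ → EReal)
    (hFproper : (∀ x, F x ≠ ⊥) ∧ ∃ x, F x ≠ ⊤)
    (hFconv : ∀ x y : H₁, ∀ t : ℝ, 0 ≤ t → t ≤ 1 →
      F (t • x + (1 - t) • y) ≤ (t : EReal) * F x + ((1 - t : ℝ) : EReal) * F y)
    (hFlsc : LowerSemicontinuous F)
    (A : H₁ →L[ℝ] H₂) {r : ℝ} (hr : 0 < r)
    (T : H₁ → H₁)
    -- `T` is the (single-valued) inverse of `rA*A + ∂F` :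
    (hTinv : ∀ (u ξ : H₁), ξ ∈ subgradientSet F u →
      T (r • (ContinuousLinearMap.adjoint A) (A u) + ξ) = u)
    (hTsur : ∀ b : H₁,
      b - r • (ContinuousLinearMap.adjoint A) (A (T b)) ∈ subgradientSet F (T b))
    (hTLip : ∃ L : NNReal, LipschitzWith L T) :
    -- the resolvent of `λ ↦ r ∂(F* ∘ (-A*))(λ)` at `μ` equals
    -- `μ + r A (T (-(A* μ)))`:
    ∀ μ : H₂,
      (∃ x : H₁,
        -((ContinuousLinearMap.adjoint A) (μ + r • A (T (-((ContinuousLinearMap.adjoint A) μ)))))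
            ∈ subgradientSet F x ∧
        μ = (μ + r • A (T (-((ContinuousLinearMap.adjoint A) μ)))) - r • A x) ∧
      ∀ q : H₂,
        (∃ x : H₁, -((ContinuousLinearMap.adjoint A) q) ∈ subgradientSet F x ∧
          μ = q - r • A x) →
        q = μ + r • A (T (-((ContinuousLinearMap.adjoint A) μ))) := by
  intro μ
  constructor
  · refine ⟨T (-((ContinuousLinearMap.adjoint A) μ)), ?_, by abel⟩
    have h := hTsur (-((ContinuousLinearMap.adjoint A) μ))
    have : -((ContinuousLinearMap.adjoint A)
        (μ + r • A (T (-((ContinuousLinearMap.adjoint A) μ))))) =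
        -((ContinuousLinearMap.adjoint A) μ) - r • (ContinuousLinearMap.adjoint A)
          (A (T (-((ContinuousLinearMap.adjoint A) μ)))) := by
      simp [map_add, map_smul]; abel
    rw [this]; exact h
  · rintro q ⟨x, hx, hq⟩
    have hqx : q = μ + r • A x := by rw [hq]; abel
    have hAq : -((ContinuousLinearMap.adjoint A) q) =
        -((ContinuousLinearMap.adjoint A) μ) - r • (ContinuousLinearMap.adjoint A) (A x) := by
      rw [hqx]; simp [map_add, map_smul]; abel
    have := hTinv x (-((ContinuousLinearMap.adjoint A) q)) hx
    rw [hAq] at this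
    have heq : r • (ContinuousLinearMap.adjoint A) (A x) +
        (-((ContinuousLinearMap.adjoint A) μ) - r • (ContinuousLinearMap.adjoint A) (A x)) =
        -((ContinuousLinearMap.adjoint A) μ) := by abel
    rw [heq] at this
    rw [hqx, this]
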